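/- arXiv:1503.07676 — 6 statements merged into one kernel-verified Lean document; each statement's English description precedes it below -/
import Mathlib

section
/- Let C be an n×n nonnegative matrix with ∑_i C_{ij} < 1 for every j, and let Ĉ be the diagonal matrix with Ĉ_{jj} = 1 - ∑_i C_{ij}. Then for every vector w with nonnegative entries, the ℓ1 norm of Ĉ(I-C)^{-1} w equals the ℓ1 norm of w. -/
open Matrix

/-- If `C ≥ 0` with all column sums `< 1` and `Ĉ` is the diagonal matrix of
self-holdings `Ĉ_{jj} = 1 - ∑_i C_{ij}`, then for every nonnegative vector `w`,
`‖Ĉ(I-C)⁻¹ w‖₁ = ‖w‖₁`: total market value equals total asset value. -/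
theorem market_value_conservation {n : ℕ} (C : Matrix (Fin n) (Fin n) ℝ)
    (hpos : ∀ i j, 0 ≤ C i j)
    (hcol : ∀ j, ∑ i, C i j < 1)
    (Chat : Matrix (Fin n) (Fin n) ℝ)
    (hChat : Chat = Matrix.diagonal (fun j => 1 - ∑ i, C i j))
    (w : Fin n → ℝ) (hw : ∀ i, 0 ≤ w i) :
    ∑ i, |((Chat * (1 - C)⁻¹) *ᵥ w) i| = ∑ i, |w i| := by
  -- `1 - C` has nonzero determinant by column diagonal dominance
  have hdet : (1 - C).det ≠ 0 := by
    apply det_ne_zero_of_sum_col_lt_diag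
    intro k
    have hkk : C k k ≤ ∑ i, C i k := Finset.single_le_sum (fun i _ => hpos i k)
      (Finset.mem_univ k)
    have h1 : ∑ i ∈ Finset.univ.erase k, ‖(1 - C : Matrix (Fin n) (Fin n) ℝ) i k‖
        = ∑ i ∈ Finset.univ.erase k, C i k := by
      apply Finset.sum_congr rfl
      intro i hi
      have hik : i ≠ k := Finset.ne_of_mem_erase hi
      simp [Matrix.sub_apply, Matrix.one_apply_ne hik, abs_of_nonneg (hpos i k)]
    have h2 : ∑ i ∈ Finset.univ.erase k, C i k = (∑ i, C i k) - C k k := by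
      rw [Finset.sum_erase_eq_sub (Finset.mem_univ k)]
    have h3 : (1 - C : Matrix (Fin n) (Fin n) ℝ) k k = 1 - C k k := by
      simp [Matrix.sub_apply, Matrix.one_apply_eq]
    rw [h1, h2, h3]
    have hck : C k k < 1 := lt_of_le_of_lt hkk (hcol k)
    rw [Real.norm_eq_abs, abs_of_nonneg (by linarith : (0:ℝ) ≤ 1 - C k k)]
    linarith [hcol k]
  have hunit : IsUnit (1 - C).det := isUnit_iff_ne_zero.mpr hdet
  set x : Fin n → ℝ := (1 - C)⁻¹ *ᵥ w with hxdef
  have hsolve : ∀ i, x i - ∑ j, C i j * x j = w i := by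
    have h : (1 - C) *ᵥ x = w := by
      rw [hxdef, Matrix.mulVec_mulVec, Matrix.mul_nonsing_inv _ hunit, Matrix.one_mulVec]
    intro i
    have h2 := congrFun h i
    rw [Matrix.sub_mulVec] at h2
    simpa [Matrix.one_mulVec, Matrix.mulVec, dotProduct] using h2
  -- x is nonnegative
  have hx : ∀ i, 0 ≤ x i := by
    by_contra hcon
    push_neg at hcon
    set S : Finset (Fin n) := Finset.univ.filter (fun i => x i < 0) with hS
    have hSne : S.Nonempty := by
      obtain ⟨i, hi⟩ := hcon
      exact ⟨i, by simp [hS, hi]⟩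
    have hwS : 0 ≤ ∑ i ∈ S, w i := Finset.sum_nonneg fun i _ => hw i
    have key : ∑ i ∈ S, ∑ j, C i j * x j > ∑ j ∈ S, x j := by
      rw [Finset.sum_comm]
      calc ∑ j, ∑ i ∈ S, C i j * x j
          = ∑ j, (∑ i ∈ S, C i j) * x j := by
            simp [Finset.sum_mul]
        _ ≥ ∑ j ∈ S, (∑ i ∈ S, C i j) * x j := by
            rw [← Finset.sum_filter_add_sum_filter_not Finset.univ (fun j => x j < 0)]
            have : ∀ j ∈ Finset.univ.filter (fun j => ¬ x j < 0),
                0 ≤ (∑ i ∈ S, C i j) * x j := by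
              intro j hj
              simp only [Finset.mem_filter, not_lt] at hj
              exact mul_nonneg (Finset.sum_nonneg fun i _ => hpos i j) hj.2
            have hge : 0 ≤ ∑ j ∈ Finset.univ.filter (fun j => ¬ x j < 0),
                (∑ i ∈ S, C i j) * x j := Finset.sum_nonneg this
            rw [← hS]
            linarith
        _ > ∑ j ∈ S, x j := by
            apply Finset.sum_lt_sum_of_nonempty hSne
            intro j hj
            have hxj : x j < 0 := by
              simp only [hS, Finset.mem_filter] at hj; exact hj.2
            have hcj : ∑ i ∈ S, C i j ≤ ∑ i, C i j :=
              Finset.sum_le_sum_of_subset_of_nonneg (Finset.subset_univ S)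
                (fun i _ _ => hpos i j)
            have hcj1 : ∑ i ∈ S, C i j < 1 := lt_of_le_of_lt hcj (hcol j)
            nlinarith
    have : ∑ i ∈ S, w i = ∑ i ∈ S, x i - ∑ i ∈ S, ∑ j, C i j * x j := by
      rw [← Finset.sum_sub_distrib]
      exact (Finset.sum_congr rfl fun i _ => (hsolve i)).symm
    linarith
  -- the product vector
  have hvec : ∀ i, ((Chat * (1 - C)⁻¹) *ᵥ w) i = (1 - ∑ k, C k i) * x i := by
    intro i
    rw [← Matrix.mulVec_mulVec, ← hxdef, hChat]
    simp [Matrix.mulVec_diagonal]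
  have habs : ∀ i, |((Chat * (1 - C)⁻¹) *ᵥ w) i| = (1 - ∑ k, C k i) * x i := by
    intro i
    rw [hvec i]
    exact abs_of_nonneg (mul_nonneg (by linarith [hcol i]) (hx i))
  calc ∑ i, |((Chat * (1 - C)⁻¹) *ᵥ w) i|
      = ∑ i, (1 - ∑ k, C k i) * x i := Finset.sum_congr rfl fun i _ => habs i
    _ = ∑ i, x i - ∑ i, ∑ k, C k i * x i := by
        rw [← Finset.sum_sub_distrib]
        apply Finset.sum_congr rfl
        intro i _
        rw [sub_mul, one_mul, Finset.sum_mul]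
    _ = ∑ i, x i - ∑ i, ∑ j, C i j * x j := by rw [Finset.sum_comm]
    _ = ∑ i, (x i - ∑ j, C i j * x j) := by rw [Finset.sum_sub_distrib]
    _ = ∑ i, w i := Finset.sum_congr rfl fun i _ => hsolve i
    _ = ∑ i, |w i| := Finset.sum_congr rfl fun i _ => (abs_of_nonneg (hw i)).symm
end

section
/- Let C be an n×n nonnegative matrix with column sums strictly less than 1 and Ĉ the diagonal matrix with Ĉ_{jj} = 1 - ∑_i C_{ij}. Then the induced ℓ1 operator norm of Ĉ(I-C)^{-1} is at most 1. -/
open Matrix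

/-- Induced ℓ1 operator norm of a square real matrix: max absolute column sum. -/
noncomputable def opNormL1 {n : ℕ} (M : Matrix (Fin n) (Fin n) ℝ) : ℝ :=
  ⨆ j, ∑ i, |M i j|

section Aux

attribute [local instance] Matrix.linftyOpNormedRing Matrix.linftyOpNormedAlgebra

/-- Entries of powers of an entrywise nonnegative matrix are nonnegative. -/
lemma pow_entry_nonneg {n : ℕ} (D : Matrix (Fin n) (Fin n) ℝ)
    (hD : ∀ i j, 0 ≤ D i j) (k : ℕ) : ∀ i j, 0 ≤ (D ^ k) i j := by
  induction k with
  | zero =>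
    intro i j
    by_cases h : i = j <;> simp [pow_zero, Matrix.one_apply, h]
  | succ m ih =>
    intro i j
    rw [pow_succ, Matrix.mul_apply]
    exact Finset.sum_nonneg fun l _ => mul_nonneg (ih i l) (hD l j)

/-- linfty operator norm bound from strict row-sum bounds (nonempty case). -/
lemma linfty_norm_lt_one {n : ℕ} (D : Matrix (Fin n) (Fin n) ℝ)
    (hrow : ∀ i, ∑ j, |D i j| < 1) (hn : 0 < n) : ‖D‖ < 1 := by
  rw [Matrix.linfty_opNorm_def]
  have : ((Finset.univ : Finset (Fin n)).sup fun i : Fin n => ∑ j, ‖D i j‖₊ : NNReal) < 1 := by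
    rw [Finset.sup_lt_iff (by norm_num : (⊥ : NNReal) < 1)]
    intro i _
    have : ((∑ j, ‖D i j‖₊ : NNReal) : ℝ) < 1 := by
      push_cast
      simpa [Real.norm_eq_abs] using hrow i
    exact_mod_cast this
  exact_mod_cast this

/-- Entries of `(1 - D)⁻¹` are nonnegative when `D ≥ 0` and `‖D‖ < 1` (linfty op norm). -/
lemma inv_one_sub_nonneg {n : ℕ} (D : Matrix (Fin n) (Fin n) ℝ)
    (hD : ∀ i j, 0 ≤ D i j) (hnorm : ‖D‖ < 1) : ∀ i j, 0 ≤ (1 - D)⁻¹ i j := by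
  intro i j
  have hsum : HasSum (fun k : ℕ => D ^ k) (Ring.inverse (1 - D)) :=
    hasSum_geom_series_inverse D hnorm
  -- evaluation at (i, j) as a linear map
  let f : Matrix (Fin n) (Fin n) ℝ →ₗ[ℝ] ℝ :=
    { toFun := fun M => M i j
      map_add' := fun _ _ => rfl
      map_smul' := fun _ _ => rfl }
  have hf : Continuous f := LinearMap.continuous_of_finiteDimensional f
  have hentry : HasSum (fun k : ℕ => (D ^ k) i j) (Ring.inverse (1 - D) i j) :=
    hsum.map f hf
  have h0 : 0 ≤ Ring.inverse (1 - D) i j :=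
    hentry.nonneg fun k => pow_entry_nonneg D hD k i j
  rwa [Matrix.nonsing_inv_eq_ringInverse]

end Aux

/-- If `C ≥ 0` with all column sums `< 1` and `Ĉ` is the diagonal self-holdings
matrix, then the induced ℓ1 operator norm of `Ĉ(I-C)⁻¹` is at most 1. -/
theorem market_matrix_norm_le_one {n : ℕ} (C : Matrix (Fin n) (Fin n) ℝ)
    (hpos : ∀ i j, 0 ≤ C i j)
    (hcol : ∀ j, ∑ i, C i j < 1)
    (Chat : Matrix (Fin n) (Fin n) ℝ)
    (hChat : Chat = Matrix.diagonal (fun j => 1 - ∑ i, C i j)) :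
    opNormL1 (Chat * (1 - C)⁻¹) ≤ 1 := by
  rcases Nat.eq_zero_or_pos n with hn | hn
  · subst hn
    simp [opNormL1, Real.iSup_of_isEmpty]
  letI := Matrix.linftyOpNormedRing (α := ℝ) (n := Fin n)
  letI := Matrix.linftyOpNormedAlgebra (R := ℝ) (α := ℝ) (n := Fin n)
  -- transpose has linfty norm < 1
  have hrow : ∀ i, ∑ j, |Cᵀ i j| < 1 := by
    intro i
    have : ∑ j, |Cᵀ i j| = ∑ j, C j i := by
      apply Finset.sum_congr rfl
      intro j _
      simp [Matrix.transpose_apply, abs_of_nonneg (hpos j i)]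
    rw [this]; exact hcol i
  have hTnorm : ‖Cᵀ‖ < 1 := linfty_norm_lt_one Cᵀ hrow hn
  have hTpos : ∀ i j, 0 ≤ Cᵀ i j := fun i j => hpos j i
  -- (1 - Cᵀ)⁻¹ entries are nonnegative
  have hTinv : ∀ i j, 0 ≤ (1 - Cᵀ)⁻¹ i j := inv_one_sub_nonneg Cᵀ hTpos hTnorm
  -- invertibility of 1 - C
  have hunitT : IsUnit (1 - Cᵀ) := isUnit_one_sub_of_norm_lt_one hTnorm
  have hdetT : IsUnit (1 - Cᵀ).det := (Matrix.isUnit_iff_isUnit_det _).mp hunitT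
  have htr : (1 - C)ᵀ = 1 - Cᵀ := by
    rw [Matrix.transpose_sub, Matrix.transpose_one]
  have hdet : IsUnit (1 - C).det := by
    rw [← Matrix.det_transpose, htr]; exact hdetT
  -- B = (1 - C)⁻¹ has nonnegative entries
  set B := (1 - C)⁻¹ with hB
  have hBpos : ∀ i j, 0 ≤ B i j := by
    intro i j
    have : Bᵀ = (1 - Cᵀ)⁻¹ := by
      rw [hB, Matrix.transpose_nonsing_inv, htr]
    have := congrFun (congrFun this j) i
    rw [Matrix.transpose_apply] at this
    rw [this]
    exact hTinv j i
  -- (1 - C) * B = 1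
  have hmul : (1 - C) * B = 1 := Matrix.mul_nonsing_inv _ hdet
  -- M = Chat * B has nonnegative entries
  set M := Chat * B with hM
  have hChatd : ∀ j, 0 ≤ 1 - ∑ i, C i j := fun j => le_of_lt (sub_pos.mpr (hcol j))
  have hMpos : ∀ i j, 0 ≤ M i j := by
    intro i j
    rw [hM, hChat, Matrix.mul_apply]
    apply Finset.sum_nonneg
    intro l _
    rcases eq_or_ne i l with h | h
    · subst h
      rw [Matrix.diagonal_apply_eq]
      exact mul_nonneg (hChatd i) (hBpos i j)
    · rw [Matrix.diagonal_apply_ne _ h, zero_mul]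
  -- column sums of M equal 1
  have hMcol : ∀ j, ∑ i, M i j = 1 := by
    intro j
    have h1 : ∑ i, M i j = ∑ i, (1 - ∑ k, C k i) * B i j := by
      apply Finset.sum_congr rfl
      intro i _
      rw [hM, hChat, Matrix.mul_apply]
      rw [Finset.sum_eq_single i]
      · rw [Matrix.diagonal_apply_eq]
      · intro l _ hl
        rw [Matrix.diagonal_apply_ne _ (Ne.symm hl), zero_mul]
      · intro h; exact absurd (Finset.mem_univ i) h
    have h2 : ∑ i, ((1 - C) * B) i j = 1 := by
      have : ∀ i : Fin n, ((1 - C) * B) i j = (1 : Matrix (Fin n) (Fin n) ℝ) i j := by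
        intro i; rw [hmul]
      rw [Finset.sum_congr rfl fun i _ => this i]
      rw [Finset.sum_eq_single j]
      · simp [Matrix.one_apply]
      · intro l _ hl; simp [Matrix.one_apply, hl]
      · intro h; exact absurd (Finset.mem_univ j) h
    rw [h1]
    have lhs : ∀ i : Fin n, (1 - ∑ k, C k i) * B i j = B i j - ∑ k, C k i * B i j := by
      intro i; rw [sub_mul, one_mul, Finset.sum_mul]
    have rhs : ∀ i : Fin n, ((1 - C) * B) i j = B i j - ∑ l, C i l * B l j := by
      intro i
      rw [Matrix.mul_apply]
      simp only [Matrix.sub_apply, Matrix.one_apply, sub_mul]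
      rw [Finset.sum_sub_distrib]
      congr 1
      rw [Finset.sum_eq_single i]
      · simp
      · intro l _ hl; simp [Ne.symm hl]
      · intro h; exact absurd (Finset.mem_univ i) h
    calc ∑ i, (1 - ∑ k, C k i) * B i j
        = ∑ i : Fin n, ((1 - C) * B) i j := by
          conv_lhs => rw [Finset.sum_congr rfl fun i _ => lhs i]
          conv_rhs => rw [Finset.sum_congr rfl fun i _ => rhs i]
          rw [Finset.sum_sub_distrib, Finset.sum_sub_distrib]
          congr 1
          rw [Finset.sum_comm]
      _ = 1 := h2
  -- conclude
  haveI : Nonempty (Fin n) := ⟨⟨0, hn⟩⟩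
  rw [opNormL1]
  apply ciSup_le
  intro j
  have : ∑ i, |M i j| = ∑ i, M i j := by
    apply Finset.sum_congr rfl
    intro i _
    exact abs_of_nonneg (hMpos i j)
  rw [this, hMcol j]
end

section
/- Let C and C̃ be n×n nonnegative cross-holdings matrices with corresponding diagonal self-holdings matrices Ĉ and Ĉ̃, where every diagonal entry of Ĉ and Ĉ̃ is at least r > 0. Write Ẽ = C̃ - C and Ê = Ĉ̃ - Ĉ, and suppose ‖Ẽ‖ + ‖Ê‖ < ε in the induced ℓ1 operator norm. Then ‖Ĉ̃(I-C̃)^{-1} - Ĉ(I-C)^{-1}‖ ≤ ε/r. -/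
/-!
Write `B = (1 - C)⁻¹` and `d = 1ᵀ (1 - C)` for the diagonal of `Ĉ`. As `‖Cᵀ‖_∞ = ‖C‖₁ < 1`,
`B` is the Neumann series `∑ Cᵏ` and so is entrywise nonnegative. The identity `d B = 1ᵀ` then
says both that `Ĉ B` is column-stochastic, so `‖Ĉ B‖₁ ≤ 1`, and, since `d ≥ r`, that every column
sum of `B` is at most `1 / r`. The bound follows from the resolvent identity
`Ĉ̃ B̃ - Ĉ B = (Ê + Ĉ B Ẽ) B̃` and submultiplicativity of `‖·‖₁`.
-/

open Matrix

attribute [local instance] Matrix.linftyOpNormedRing Matrix.linftyOpNormedAlgebra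

namespace Matrix

variable {ι : Type*} [Fintype ι]

variable [DecidableEq ι] in
theorem inv_one_sub_apply_nonneg {A : Matrix ι ι ℝ} (hA₀ : ∀ i j, 0 ≤ A i j) (hA : ‖A‖ < 1)
    (i j : ι) : 0 ≤ (1 - A)⁻¹ i j := by
  have hsum : HasSum (fun k => A ^ k) (1 - A)⁻¹ := by
    rw [inv_eq_left_inv (geom_series_mul_neg A hA)]
    exact (summable_geometric_of_norm_lt_one hA).hasSum
  exact (Pi.hasSum.mp (Pi.hasSum.mp hsum i) j).nonneg fun k => pow_apply_nonneg hA₀ k i j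

def selfHoldings (C : Matrix ι ι ℝ) : ι → ℝ := fun j => 1 - ∑ i, C i j

variable {C : Matrix ι ι ℝ}

theorem le_selfHoldings {r : ℝ} (hCcol : ∀ j, ∑ i, C i j ≤ 1 - r) (j : ι) :
    r ≤ selfHoldings C j :=
  le_sub_comm.mp (hCcol j)

variable [DecidableEq ι]

theorem selfHoldings_vecMul_inv_one_sub (hC : IsUnit (1 - C).det) :
    selfHoldings C ᵥ* (1 - C)⁻¹ = 1 := by
  have h : selfHoldings C = 1 ᵥ* (1 - C) := by
    ext j
    simp [selfHoldings, vecMul, dotProduct, Finset.sum_sub_distrib, one_apply]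
  rw [h, vecMul_vecMul, mul_nonsing_inv _ hC, vecMul_one]

theorem sum_selfHoldings_mul_inv_one_sub_apply (hC : IsUnit (1 - C).det) (j : ι) :
    ∑ i, selfHoldings C i * (1 - C)⁻¹ i j = 1 :=
  congrFun (selfHoldings_vecMul_inv_one_sub hC) j

theorem sum_inv_one_sub_apply_le {r : ℝ} (hr : 0 < r) (hC : IsUnit (1 - C).det)
    (hB₀ : ∀ i j, 0 ≤ (1 - C)⁻¹ i j) (hCcol : ∀ j, ∑ i, C i j ≤ 1 - r) (j : ι) :
    ∑ i, (1 - C)⁻¹ i j ≤ 1 / r := by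
  rw [le_div_iff₀' hr, Finset.mul_sum]
  calc ∑ i, r * (1 - C)⁻¹ i j ≤ ∑ i, selfHoldings C i * (1 - C)⁻¹ i j := by
        gcongr with i
        · exact hB₀ i j
        · exact le_selfHoldings hCcol i
    _ = 1 := sum_selfHoldings_mul_inv_one_sub_apply hC j

end Matrix

section opNormL1

variable {n : ℕ}

theorem opNormL1_eq_norm_transpose (M : Matrix (Fin n) (Fin n) ℝ) : opNormL1 M = ‖Mᵀ‖ := by
  simp only [opNormL1, linfty_opNorm_def, transpose_apply, Finset.sup_univ_eq_ciSup,
    NNReal.coe_iSup, NNReal.coe_sum, coe_nnnorm, Real.norm_eq_abs]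

theorem opNormL1_nonneg (M : Matrix (Fin n) (Fin n) ℝ) : 0 ≤ opNormL1 M := by
  rw [opNormL1_eq_norm_transpose]
  exact norm_nonneg _

theorem opNormL1_add_le (M N : Matrix (Fin n) (Fin n) ℝ) :
    opNormL1 (M + N) ≤ opNormL1 M + opNormL1 N := by
  simpa only [opNormL1_eq_norm_transpose, transpose_add] using norm_add_le Mᵀ Nᵀ

theorem opNormL1_mul_le (M N : Matrix (Fin n) (Fin n) ℝ) :
    opNormL1 (M * N) ≤ opNormL1 M * opNormL1 N := by
  simpa only [opNormL1_eq_norm_transpose, transpose_mul, mul_comm ‖Mᵀ‖] using norm_mul_le Nᵀ Mᵀ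

theorem opNormL1_le_of_nonneg {M : Matrix (Fin n) (Fin n) ℝ} {c : ℝ} (hM : ∀ i j, 0 ≤ M i j)
    (hc : 0 ≤ c) (hcol : ∀ j, ∑ i, M i j ≤ c) : opNormL1 M ≤ c :=
  Real.iSup_le (fun j => by simpa only [abs_of_nonneg (hM _ j)] using hcol j) hc

end opNormL1

section CrossHoldings

variable {n : ℕ} {C : Matrix (Fin n) (Fin n) ℝ} {r : ℝ}
  (hr : 0 < r) (hC₀ : ∀ i j, 0 ≤ C i j) (hCcol : ∀ j, ∑ i, C i j ≤ 1 - r)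
include hr hC₀ hCcol

theorem norm_transpose_lt_one : ‖Cᵀ‖ < 1 := by
  rw [← opNormL1_eq_norm_transpose]
  -- `1 - r` is negative if `n = 0` and `r > 1`
  refine (opNormL1_le_of_nonneg hC₀ (le_max_right (1 - r) 0) fun j => ?_).trans_lt ?_
  · exact (hCcol j).trans (le_max_left _ _)
  · exact max_lt (by linarith) one_pos

theorem isUnit_det_one_sub : IsUnit (1 - C).det := by
  rw [← det_transpose, transpose_sub, transpose_one]
  exact isUnit_det_of_left_inverse (geom_series_mul_neg _ (norm_transpose_lt_one hr hC₀ hCcol))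

theorem inv_one_sub_apply_nonneg_of_sum_le (i j : Fin n) : 0 ≤ (1 - C)⁻¹ i j := by
  rw [← transpose_apply (1 - C)⁻¹, transpose_nonsing_inv, transpose_sub, transpose_one]
  exact inv_one_sub_apply_nonneg (fun i j => hC₀ j i) (norm_transpose_lt_one hr hC₀ hCcol) j i

theorem opNormL1_inv_one_sub_le : opNormL1 (1 - C)⁻¹ ≤ 1 / r :=
  opNormL1_le_of_nonneg (inv_one_sub_apply_nonneg_of_sum_le hr hC₀ hCcol) (by positivity)
    (sum_inv_one_sub_apply_le hr (isUnit_det_one_sub hr hC₀ hCcol)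
      (inv_one_sub_apply_nonneg_of_sum_le hr hC₀ hCcol) hCcol)

theorem opNormL1_diagonal_selfHoldings_mul_inv_one_sub_le :
    opNormL1 (diagonal (selfHoldings C) * (1 - C)⁻¹) ≤ 1 := by
  refine opNormL1_le_of_nonneg (fun i j => ?_) zero_le_one fun j => ?_ <;>
    simp only [diagonal_mul]
  · exact mul_nonneg (hr.le.trans (le_selfHoldings hCcol i))
      (inv_one_sub_apply_nonneg_of_sum_le hr hC₀ hCcol i j)
  · exact (sum_selfHoldings_mul_inv_one_sub_apply (isUnit_det_one_sub hr hC₀ hCcol) j).le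

end CrossHoldings

theorem mul_sub_mul_eq_of_inverses {R : Type*} [Ring R] {c c' b b' d d' : R}
    (hb : b * (1 - c) = 1) (hb' : (1 - c') * b' = 1) :
    d' * b' - d * b = (d' - d + d * b * (c' - c)) * b' := by
  have hres : b * (c' - c) * b' = b' - b := by
    calc b * (c' - c) * b' = b * (1 - c) * b' - b * ((1 - c') * b') := by noncomm_ring
      _ = b' - b := by rw [hb, hb', one_mul, mul_one]
  calc d' * b' - d * b = (d' - d) * b' + d * (b' - b) := by noncomm_ring
    _ = (d' - d + d * b * (c' - c)) * b' := by rw [← hres]; noncomm_ring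

theorem sensitivity_upper_bound_general {n : ℕ}
    (C Ct : Matrix (Fin n) (Fin n) ℝ) (r ε : ℝ) (hr : 0 < r)
    (hCpos : ∀ i j, 0 ≤ C i j) (hCtpos : ∀ i j, 0 ≤ Ct i j)
    (hCcol : ∀ j, ∑ i, C i j ≤ 1 - r)
    (hCtcol : ∀ j, ∑ i, Ct i j ≤ 1 - r)
    (Chat Chatt : Matrix (Fin n) (Fin n) ℝ)
    (hChat : Chat = Matrix.diagonal (fun j => 1 - ∑ i, C i j))
    (hpert : opNormL1 (Ct - C) + opNormL1 (Chatt - Chat) < ε) :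
    opNormL1 (Chatt * (1 - Ct)⁻¹ - Chat * (1 - C)⁻¹) ≤ ε / r := by
  have hval : opNormL1 (Chat * (1 - C)⁻¹) ≤ 1 :=
    hChat ▸ opNormL1_diagonal_selfHoldings_mul_inv_one_sub_le hr hCpos hCcol
  have hfactor : opNormL1 (Chatt - Chat + Chat * (1 - C)⁻¹ * (Ct - C)) ≤ ε := by
    calc _ ≤ opNormL1 (Chatt - Chat) + opNormL1 (Chat * (1 - C)⁻¹) * opNormL1 (Ct - C) :=
          (opNormL1_add_le _ _).trans (add_le_add le_rfl (opNormL1_mul_le _ _))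
      _ ≤ opNormL1 (Chatt - Chat) + opNormL1 (Ct - C) := by
          gcongr
          exact mul_le_of_le_one_left (opNormL1_nonneg _) hval
      _ ≤ ε := by linarith
  rw [mul_sub_mul_eq_of_inverses (nonsing_inv_mul _ (isUnit_det_one_sub hr hCpos hCcol))
    (mul_nonsing_inv _ (isUnit_det_one_sub hr hCtpos hCtcol))]
  calc _ ≤ opNormL1 (Chatt - Chat + Chat * (1 - C)⁻¹ * (Ct - C)) * opNormL1 (1 - Ct)⁻¹ :=
        opNormL1_mul_le _ _
    _ ≤ ε * (1 / r) := mul_le_mul hfactor (opNormL1_inv_one_sub_le hr hCtpos hCtcol)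
        (opNormL1_nonneg _) ((opNormL1_nonneg _).trans hfactor)
    _ = ε / r := mul_one_div ε r

/-- Sensitivity upper bound: if two nonnegative cross-holdings matrices with
self-holdings at least `r > 0` differ, together with their diagonal
self-holdings matrices, by less than `ε` in ℓ1 operator norm, then the
market-valuation matrices differ by at most `ε / r`. -/
theorem sensitivity_upper_bound {n : ℕ}
    (C Ct : Matrix (Fin n) (Fin n) ℝ) (r ε : ℝ) (hr : 0 < r)
    (hCpos : ∀ i j, 0 ≤ C i j) (hCtpos : ∀ i j, 0 ≤ Ct i j)
    (hCcol : ∀ j, ∑ i, C i j ≤ 1 - r)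
    (hCtcol : ∀ j, ∑ i, Ct i j ≤ 1 - r)
    (Chat Chatt : Matrix (Fin n) (Fin n) ℝ)
    (hChat : Chat = Matrix.diagonal (fun j => 1 - ∑ i, C i j))
    (hChatt : Chatt = Matrix.diagonal (fun j => 1 - ∑ i, Ct i j))
    (hpert : opNormL1 (Ct - C) + opNormL1 (Chatt - Chat) < ε) :
    opNormL1 (Chatt * (1 - Ct)⁻¹ - Chat * (1 - C)⁻¹) ≤ ε / r :=
  sensitivity_upper_bound_general C Ct r ε hr hCpos hCtpos hCcol hCtcol Chat Chatt hChat hpert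
end

section
/- For any 0 < r < 1 and 0 < ε < 1-r, consider the 4×4 cross-holdings matrix C with C_{12} = 1-r-ε, C_{21} = 1-r, C_{32} = ε, all other entries 0, and let C̃ be the same except C̃_{32} = 0 and C̃_{42} = ε. With asset vector w = (0, v, 0, 0)ᵀ for v > 0 and Ĉ = Ĉ̃ = diag(r, r, 1, 1), the market valuations satisfy ‖Ĉ(I-C)^{-1}w - Ĉ̃(I-C̃)^{-1}w‖₁ ≥ (ε v)/(r(2-r) + (1-r)ε). -/
/-!
Both cross-holding matrices have the form `pairHoldings p q a b c d`: banks 1 and 2 hold each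
other, banks 3 and 4 only hold shares of banks 1 and 2. Then `1 - C` is block unit lower
triangular with determinant `Δ = 1 - p q`, which for `p = 1 - r - ε`, `q = 1 - r` is
`r (2 - r) + (1 - r) ε > 0`, and `(1 - C)⁻¹ w = (v / Δ) (p, 1, a p + b, c p + d)`.
Moving the holding `ε` of bank 2 from bank 3 to bank 4 leaves the valuations of banks 1 and 2
unchanged and moves `ε v / Δ` from bank 3 to bank 4, so the ℓ1 distance is `2 ε v / Δ`.
-/

open Matrix

theorem Matrix.inv_mulVec_eq_of_mulVec_eq {n K : Type*} [Fintype n] [DecidableEq n] [Field K]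
    {A : Matrix n n K} {x y : n → K} (hA : IsUnit A.det) (h : A *ᵥ x = y) : A⁻¹ *ᵥ y = x :=
  letI := A.invertibleOfIsUnitDet hA
  inv_mulVec_eq_vec h.symm

def pairHoldings {R : Type*} [Zero R] (p q a b c d : R) : Matrix (Fin 4) (Fin 4) R :=
  !![0, p, 0, 0; q, 0, 0, 0; a, b, 0, 0; c, d, 0, 0]

section CommRing

variable {R : Type*} [CommRing R] (p q a b c d : R)

theorem one_sub_pairHoldings :
    1 - pairHoldings p q a b c d = !![1, -p, 0, 0; -q, 1, 0, 0; -a, -b, 1, 0; -c, -d, 0, 1] := by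
  ext i j
  fin_cases i <;> fin_cases j <;> simp [pairHoldings, one_apply]

theorem det_one_sub_pairHoldings : det (1 - pairHoldings p q a b c d) = 1 - p * q := by
  rw [one_sub_pairHoldings]
  simp [det_succ_row_zero, Fin.sum_univ_succ, Fin.succAbove_of_le_castSucc,
    Fin.succAbove_of_castSucc_lt]
  ring

end CommRing

theorem inv_one_sub_pairHoldings_mulVec {K : Type*} [Field K] (p q a b c d v : K)
    (h : 1 - p * q ≠ 0) :
    (1 - pairHoldings p q a b c d)⁻¹ *ᵥ ![0, v, 0, 0] =
      (v / (1 - p * q)) • ![p, 1, a * p + b, c * p + d] := by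
  refine inv_mulVec_eq_of_mulVec_eq ?_ ?_
  · rw [det_one_sub_pairHoldings]
    exact h.isUnit
  · rw [one_sub_pairHoldings]
    have h' : 1 - q * p ≠ 0 := by rwa [mul_comm]
    ext i
    fin_cases i <;> simp [mulVec, dotProduct, Fin.sum_univ_four] <;> field_simp <;> ring

theorem sensitivity_lower_bound_general (r ε v : ℝ)
    (hr0 : 0 < r) (hr1 : r < 1) (hε0 : 0 < ε)
    (C Ct : Matrix (Fin 4) (Fin 4) ℝ)
    (hC : C = !![0, 1 - r - ε, 0, 0; 1 - r, 0, 0, 0; 0, ε, 0, 0; 0, 0, 0, 0])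
    (hCt : Ct = !![0, 1 - r - ε, 0, 0; 1 - r, 0, 0, 0; 0, 0, 0, 0; 0, ε, 0, 0])
    (Chat : Matrix (Fin 4) (Fin 4) ℝ)
    (hChat : Chat = Matrix.diagonal ![r, r, 1, 1])
    (w : Fin 4 → ℝ) (hw : w = ![0, v, 0, 0]) :
    ε * v / (r * (2 - r) + (1 - r) * ε) ≤
      ∑ i, |((Chat * (1 - C)⁻¹) *ᵥ w) i - ((Chat * (1 - Ct)⁻¹) *ᵥ w) i| := by
  set Δ := r * (2 - r) + (1 - r) * ε
  have hΔ : 1 - (1 - r - ε) * (1 - r) = Δ := by ring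
  have hΔ_pos : 0 < Δ := by
    have := mul_pos hr0 (by linarith : 0 < 2 - r)
    have := mul_pos (by linarith : 0 < 1 - r) hε0
    linarith
  rw [show C = pairHoldings (1 - r - ε) (1 - r) 0 ε 0 0 from hC,
    show Ct = pairHoldings (1 - r - ε) (1 - r) 0 0 0 ε from hCt, hChat, hw]
  simp only [← mulVec_mulVec, inv_one_sub_pairHoldings_mulVec _ _ _ _ _ _ _ (hΔ ▸ hΔ_pos.ne'), hΔ]
  simp only [mulVec_diagonal, Fin.sum_univ_four, smul_cons, smul_eq_mul, smul_empty, Fin.isValue,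
    cons_val_zero, cons_val_one, cons_val, zero_mul, zero_add, add_zero, mul_zero, mul_one, one_mul,
    sub_self, sub_zero, zero_sub, abs_zero, abs_neg]
  rw [div_mul_eq_mul_div, mul_comm v ε]
  linarith [le_abs_self (ε * v / Δ), abs_nonneg (ε * v / Δ)]

/-- The explicit four-bank construction witnessing the sensitivity lower bound:
moving a single holding of weight `ε` from `B₃` to `B₄` changes the market
valuations in ℓ1 norm by at least `εv / (r(2-r) + (1-r)ε)`. -/
theorem sensitivity_lower_bound (r ε v : ℝ)
    (hr0 : 0 < r) (hr1 : r < 1) (hε0 : 0 < ε) (hε1 : ε < 1 - r) (hv : 0 < v)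
    (C Ct : Matrix (Fin 4) (Fin 4) ℝ)
    (hC : C = !![0, 1 - r - ε, 0, 0; 1 - r, 0, 0, 0; 0, ε, 0, 0; 0, 0, 0, 0])
    (hCt : Ct = !![0, 1 - r - ε, 0, 0; 1 - r, 0, 0, 0; 0, 0, 0, 0; 0, ε, 0, 0])
    (Chat : Matrix (Fin 4) (Fin 4) ℝ)
    (hChat : Chat = Matrix.diagonal ![r, r, 1, 1])
    (w : Fin 4 → ℝ) (hw : w = ![0, v, 0, 0]) :
    ε * v / (r * (2 - r) + (1 - r) * ε) ≤
      ∑ i, |((Chat * (1 - C)⁻¹) *ᵥ w) i - ((Chat * (1 - Ct)⁻¹) *ᵥ w) i| :=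
  sensitivity_lower_bound_general r ε v hr0 hr1 hε0 C Ct hC hCt Chat hChat w hw
end

section
/- In the hardness-reduction network built from bipartite graph G: if the failure of a set S of d left-hand institutions causes the failure of a set P of right-hand institutions with |P| ≥ d, then G contains a complete bipartite subgraph (biclique) with parts of sizes d and |P|; in particular G contains a balanced biclique of size min(d,|P|) = d. -/
/-- In the hardness-reduction network, a right-hand institution `j` fails only
if its value drops by at least `d/N`, where each failed left neighbor
contributes exactly `1/N` to the drop.  Hence if the failure of a set `S` of
`d` left institutions causes the failure of a set `P` of right institutions
with `|P| ≥ d`, then every member of `P` is adjacent to every member of `S`: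
`S ∪ P` induces a complete bipartite subgraph with parts of sizes `d` and
`|P|`, and in particular a balanced biclique of size `min(d, |P|) = d`. -/
theorem failures_give_biclique {n : ℕ}
    (adj : Fin n → Fin n → Prop) [DecidableRel adj]
    (N : ℝ) (hN : 0 < N) (d : ℕ)
    (S P : Finset (Fin n)) (hS : S.card = d) (hP : d ≤ P.card)
    (hfail : ∀ j ∈ P,
      (d : ℝ) / N ≤ (1 / N) * ((S.filter fun i => adj i j).card : ℝ)) :
    ∀ i ∈ S, ∀ j ∈ P, adj i j := by
  intro i hi j hj
  have h := hfail j hj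
  have hle : (d : ℝ) ≤ ((S.filter fun i => adj i j).card : ℝ) := by
    rw [div_eq_mul_inv, mul_comm] at h
    have := mul_le_mul_of_nonneg_left h (le_of_lt hN)
    rw [one_div] at this
    field_simp at this
    exact_mod_cast this
  have hcard : d ≤ (S.filter fun i => adj i j).card := by exact_mod_cast hle
  have hsub : S.filter (fun i => adj i j) = S := Finset.eq_of_subset_of_card_le
    (Finset.filter_subset _ _) (by rw [hS]; exact hcard)
  have := hsub ▸ hi
  exact (Finset.mem_filter.mp ((hsub.symm ▸ hi) : i ∈ S.filter fun i => adj i j)).2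
end

section
/- For any 0 < r < 1, let f(ε) = ε/(r(2-r) + (1-r)ε); then f is strictly increasing in ε on (0,1), for all 0 < ε ≤ 1 and 0 < r < 1 we have f(ε) ≥ (1/2)·ε/(r + (1-r)ε/2), and, setting ε' = ε/2 (so the total holdings change is ε), the valuation change 2f(ε') approaches 2 as r → 0. -/
open Filter Set

/-- The achievable sensitivity of the four-bank construction,
`f(r, ε) = ε / (r(2-r) + (1-r)ε)`. -/
noncomputable def sens (r ε : ℝ) : ℝ := ε / (r * (2 - r) + (1 - r) * ε)

/-- For fixed reserve `0 < r < 1`, the achievable sensitivity `sens r ε` is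
strictly increasing in `ε` on `(0,1)` and satisfies
`sens r ε ≥ (1/2)·ε/(r + (1-r)ε/2)`; moreover, for fixed `0 < ε ≤ 1`, taking
`ε' = ε/2` (total holdings change `ε`), the valuation change `2·sens r (ε/2)`
tends to `2` as the reserve `r → 0⁺`: the upper bound `min(ε/r, 2)` is
essentially tight. -/
theorem sensitivity_tightness (ε : ℝ) (hε0 : 0 < ε) (hε1 : ε ≤ 1) :
    (∀ r : ℝ, 0 < r → r < 1 → StrictMonoOn (fun e => sens r e) (Ioo 0 1)) ∧
    (∀ r : ℝ, 0 < r → r < 1 →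
      (1 / 2) * (ε / (r + (1 - r) * ε / 2)) ≤ sens r ε) ∧
    Tendsto (fun r : ℝ => 2 * sens r (ε / 2)) (nhdsWithin 0 (Ioi 0))
      (nhds 2) := by
  refine ⟨?_, ?_, ?_⟩
  · intro r hr0 hr1 x hx y hy hxy
    obtain ⟨hx0, _⟩ := hx
    obtain ⟨hy0, _⟩ := hy
    have ha : 0 < r * (2 - r) := by nlinarith
    have hb : 0 < 1 - r := by linarith
    have hdx : 0 < r * (2 - r) + (1 - r) * x := by nlinarith
    have hdy : 0 < r * (2 - r) + (1 - r) * y := by nlinarith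
    simp only [sens]
    rw [div_lt_div_iff₀ hdx hdy]
    nlinarith
  · intro r hr0 hr1
    have hb : 0 < 1 - r := by linarith
    have hd1 : 0 < r + (1 - r) * ε / 2 := by nlinarith
    have hd2 : 0 < r * (2 - r) + (1 - r) * ε := by nlinarith
    rw [sens, one_div, inv_mul_eq_div, div_div, div_le_div_iff₀ (by linarith) hd2]
    nlinarith [mul_nonneg hε0.le (mul_self_nonneg r)]
  · have hkey : Tendsto (fun r : ℝ => 2 * sens r (ε / 2)) (nhds 0) (nhds 2) := by
      have hden : (0 : ℝ) * (2 - 0) + (1 - 0) * (ε / 2) ≠ 0 := by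
        simp; linarith
      have : ContinuousAt (fun r : ℝ => 2 * sens r (ε / 2)) 0 := by
        unfold sens
        exact (continuousAt_const.mul ((continuousAt_const).div
          (by fun_prop) hden))
      have h2 : 2 * sens 0 (ε / 2) = 2 := by
        unfold sens; field_simp; ring
      simpa [h2] using this.tendsto
    exact hkey.mono_left nhdsWithin_le_nhds
end
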